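/- arXiv:2004.08883 — 4 statements merged into one kernel-verified Lean document; each statement's English description precedes it below -/
import Mathlib

section
/- Let A be a nonempty finite set and Q : A → ℝ. For every probability mass function π on A, Σ_{a∈A} π(a)·Q(a) − Σ_{a∈A} π(a)·log(π(a)) ≤ log(Σ_{a∈A} exp(Q(a))), and equality holds if and only if π(a) = exp(Q(a)) / Σ_{a'∈A} exp(Q(a')) for every a ∈ A. -/
/-!
Write `p` for the softmax distribution of `Q` and `Z = ∑ exp Q`, so that `log p = Q - log Z`.
Since `∑ π = 1`, the gap `log Z - (∑ π Q - ∑ π log π)` is the relative entropy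
`∑ π (log π - log p) = ∑ p · klFun (π / p)`, a sum of nonnegative terms
vanishing exactly where `π = p` (Gibbs' inequality).
-/

open Finset InformationTheory

section Gibbs

open Real

variable {ι : Type*} {s : Finset ι} {x p : ι → ℝ}

lemma mul_klFun_div {x p : ℝ} (hp : 0 < p) :
    p * klFun (x / p) = x * (log x - log p) + p - x := by
  rcases eq_or_ne x 0 with rfl | hx
  · simp [klFun_zero]
  · rw [klFun_apply, log_div hx hp.ne']
    field_simp

lemma sum_mul_klFun_div (hp : ∀ i ∈ s, 0 < p i) (hsum : ∑ i ∈ s, x i = ∑ i ∈ s, p i) :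
    ∑ i ∈ s, p i * klFun (x i / p i) = ∑ i ∈ s, x i * (log (x i) - log (p i)) := by
  rw [sum_congr rfl fun i hi ↦ mul_klFun_div (x := x i) (hp i hi), sum_sub_distrib,
    sum_add_distrib, hsum, add_sub_cancel_right]

theorem sum_mul_log_sub_log_nonneg (hx : ∀ i ∈ s, 0 ≤ x i) (hp : ∀ i ∈ s, 0 < p i)
    (hsum : ∑ i ∈ s, x i = ∑ i ∈ s, p i) :
    0 ≤ ∑ i ∈ s, x i * (log (x i) - log (p i)) := by
  rw [← sum_mul_klFun_div hp hsum]
  exact sum_nonneg fun i hi ↦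
    mul_nonneg (hp i hi).le (klFun_nonneg (div_nonneg (hx i hi) (hp i hi).le))

theorem sum_mul_log_sub_log_eq_zero_iff (hx : ∀ i ∈ s, 0 ≤ x i) (hp : ∀ i ∈ s, 0 < p i)
    (hsum : ∑ i ∈ s, x i = ∑ i ∈ s, p i) :
    ∑ i ∈ s, x i * (log (x i) - log (p i)) = 0 ↔ ∀ i ∈ s, x i = p i := by
  have hkl : ∀ i ∈ s, 0 ≤ klFun (x i / p i) := fun i hi ↦
    klFun_nonneg (div_nonneg (hx i hi) (hp i hi).le)
  rw [← sum_mul_klFun_div hp hsum,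
    sum_eq_zero_iff_of_nonneg fun i hi ↦ mul_nonneg (hp i hi).le (hkl i hi)]
  refine forall₂_congr fun i hi ↦ ?_
  rw [mul_eq_zero_iff_left (hp i hi).ne', klFun_eq_zero_iff (div_nonneg (hx i hi) (hp i hi).le),
    div_eq_one_iff_eq (hp i hi).ne']

end Gibbs

section Softmax

variable {A : Type*} [Fintype A]

noncomputable def softmax (Q : A → ℝ) (a : A) : ℝ := Real.exp (Q a) / ∑ a', Real.exp (Q a')

variable [Nonempty A]

lemma sum_exp_pos (Q : A → ℝ) : 0 < ∑ a, Real.exp (Q a) :=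
  sum_pos (fun a _ ↦ Real.exp_pos (Q a)) univ_nonempty

lemma softmax_pos (Q : A → ℝ) (a : A) : 0 < softmax Q a :=
  div_pos (Real.exp_pos _) (sum_exp_pos Q)

lemma sum_softmax (Q : A → ℝ) : ∑ a, softmax Q a = 1 := by
  simp only [softmax, ← sum_div, div_self (sum_exp_pos Q).ne']

lemma log_softmax (Q : A → ℝ) (a : A) :
    Real.log (softmax Q a) = Q a - Real.log (∑ a', Real.exp (Q a')) := by
  rw [softmax, Real.log_div (Real.exp_pos _).ne' (sum_exp_pos Q).ne', Real.log_exp]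

lemma log_sum_exp_sub_eq_sum_mul_log_sub_log_softmax (Q π : A → ℝ) (hπ1 : ∑ a, π a = 1) :
    Real.log (∑ a, Real.exp (Q a)) - ((∑ a, π a * Q a) - ∑ a, π a * Real.log (π a)) =
      ∑ a, π a * (Real.log (π a) - Real.log (softmax Q a)) := by
  simp only [log_softmax, mul_sub, sum_sub_distrib, ← sum_mul, hπ1]
  ring

end Softmax

/-- For a PMF `π` on a nonempty finite set `A` and `Q : A → ℝ`,
`∑ π(a) Q(a) − ∑ π(a) log π(a) ≤ log ∑ exp (Q a)`, with equality iff `π` is the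
softmax (Boltzmann) distribution of `Q`. -/
theorem maxEnt_le_logSumExp {A : Type*} [Fintype A] [Nonempty A] (Q : A → ℝ)
    (π : A → ℝ) (hπ0 : ∀ a, 0 ≤ π a) (hπ1 : ∑ a, π a = 1) :
    ((∑ a, π a * Q a) - ∑ a, π a * Real.log (π a) ≤ Real.log (∑ a, Real.exp (Q a))) ∧
    ((∑ a, π a * Q a) - ∑ a, π a * Real.log (π a) = Real.log (∑ a, Real.exp (Q a)) ↔
      ∀ a, π a = Real.exp (Q a) / ∑ a', Real.exp (Q a')) := by
  have hgap := log_sum_exp_sub_eq_sum_mul_log_sub_log_softmax Q π hπ1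
  have hπ0' : ∀ a ∈ univ, 0 ≤ π a := fun a _ ↦ hπ0 a
  have hp : ∀ a ∈ univ, 0 < softmax Q a := fun a _ ↦ softmax_pos Q a
  have hsum : ∑ a, π a = ∑ a, softmax Q a := by rw [hπ1, sum_softmax]
  refine ⟨?_, ?_⟩
  · linarith [sum_mul_log_sub_log_nonneg hπ0' hp hsum]
  · rw [eq_comm, ← sub_eq_zero, hgap, sum_mul_log_sub_log_eq_zero_iff hπ0' hp hsum]
    simp only [mem_univ, true_implies, softmax]
end

section
/- Let S and A be nonempty finite sets, T ≥ 0 a horizon, p₀ a strictly positive PMF on S (initial distribution), P(·|s,a) a strictly positive PMF on S for each (s,a) (transition), r : S × A → ℝ a reward, and for each t ∈ {0,…,T} let π_t(·|s) be a strictly positive PMF on A for each s (time-dependent policy). For a trajectory τ = (s⁰,a⁰,s¹,a¹,…,s^T,a^T,s^{T+1}) define p̂(τ) = p₀(s⁰)·Π_{t=0}^{T} P(s^{t+1}|s^t,a^t)·π_t(a^t|s^t) and p(τ) = (1/Z)·p₀(s⁰)·Π_{t=0}^{T} P(s^{t+1}|s^t,a^t)·exp(Σ_{t=0}^{T} r(s^t,a^t)),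 where Z = Σ_τ p₀(s⁰)·Π_t P(s^{t+1}|s^t,a^t)·exp(Σ_t r(s^t,a^t)). Then KL(p̂ ‖ p) = log Z − Σ_τ p̂(τ)·Σ_{t=0}^{T} ( r(s^t,a^t) − log π_t(a^t|s^t) ). Consequently, minimizing KL(p̂ ‖ p) over the policies π_0,…,π_T is equivalent to maximizing the maximum-entropy objective Σ_{t=0}^{T} E_{p̂}[ r(s^t,a^t) + H(π_t(·|s^t)) ]. -/
/-- Kullback–Leibler divergence between finitely supported distributions,
with the convention `0 · log 0 = 0` (automatic since `0 * x = 0`). -/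
noncomputable def KLdiv {X : Type*} [Fintype X] (p q : X → ℝ) : ℝ :=
  ∑ x, p x * Real.log (p x / q x)

/-- The trajectory distribution `p̂` induced by the initial distribution `p0`,
transition kernel `P` and time-dependent policy `pol`:
`p̂(τ) = p0(s⁰) · ∏_t P(s^{t+1}|s^t,a^t) · π_t(a^t|s^t)`. -/
noncomputable def trajHat {S A : Type*} [Fintype S] [Fintype A] (T : ℕ)
    (p0 : S → ℝ) (P : S → A → S → ℝ) (pol : Fin (T + 1) → S → A → ℝ) :
    (Fin (T + 2) → S) × (Fin (T + 1) → A) → ℝ :=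
  fun τ => p0 (τ.1 0) * ∏ t : Fin (T + 1),
    (P (τ.1 t.castSucc) (τ.2 t) (τ.1 t.succ) * pol t (τ.1 t.castSucc) (τ.2 t))

/-- The unnormalized optimal trajectory weight
`p0(s⁰) · ∏_t P(s^{t+1}|s^t,a^t) · exp(∑_t r(s^t,a^t))`. -/
noncomputable def trajOptW {S A : Type*} [Fintype S] [Fintype A] (T : ℕ)
    (p0 : S → ℝ) (P : S → A → S → ℝ) (r : S → A → ℝ) :
    (Fin (T + 2) → S) × (Fin (T + 1) → A) → ℝ :=
  fun τ => p0 (τ.1 0) * (∏ t : Fin (T + 1), P (τ.1 t.castSucc) (τ.2 t) (τ.1 t.succ)) *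
    Real.exp (∑ t : Fin (T + 1), r (τ.1 t.castSucc) (τ.2 t))

/-!
Along a trajectory, the initial-state and transition factors of `p̂` and of the optimal weight
cancel, so `log (p̂ τ / p τ) = log Z - ∑ₜ (r(sᵗ, aᵗ) - log πₜ(aᵗ | sᵗ))`; averaging over `p̂`
gives the KL identity. For the equivalence, `log Z` does not depend on the policy, and
`E_p̂[log πₜ(aᵗ | sᵗ)] = -E_p̂[H(πₜ(· | sᵗ))]`: conditionally on the path up to `sᵗ` the action
`aᵗ` is drawn from `πₜ(· | sᵗ)`, and everything after time `t` sums to one.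
-/

theorem Fin.sum_pi_cons {X M : Type*} [Fintype X] [AddCommMonoid M] {k : ℕ}
    (f : (Fin (k + 1) → X) → M) :
    ∑ σ, f σ = ∑ x, ∑ σ : Fin k → X, f (Fin.cons x σ) := by
  rw [← (Fin.consEquiv fun _ => X).sum_comp, Fintype.sum_prod_type]
  rfl

section Path

variable {S A : Type*}

noncomputable def pathWeight {k : ℕ} (P : S → A → S → ℝ) (pol : Fin k → S → A → ℝ)
    (σ : Fin (k + 1) → S) (α : Fin k → A) : ℝ :=
  ∏ i, (P (σ i.castSucc) (α i) (σ i.succ) * pol i (σ i.castSucc) (α i))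

variable [Fintype S] [Fintype A]

noncomputable def pathExpect (k : ℕ) (P : S → A → S → ℝ) (pol : Fin k → S → A → ℝ) (s : S)
    (F : (Fin (k + 1) → S) → (Fin k → A) → ℝ) : ℝ :=
  ∑ σ : Fin k → S, ∑ α : Fin k → A, pathWeight P pol (Fin.cons s σ) α * F (Fin.cons s σ) α

omit [Fintype S] [Fintype A] in
theorem pathWeight_cons {k : ℕ} (P : S → A → S → ℝ) (pol : Fin (k + 1) → S → A → ℝ)
    (s : S) (σ : Fin (k + 1) → S) (a : A) (α : Fin k → A) :
    pathWeight P pol (Fin.cons s σ) (Fin.cons a α) =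
      P s a (σ 0) * pol 0 s a * pathWeight P (fun i => pol i.succ) σ α := by
  simp only [pathWeight, Fin.prod_univ_succ, Fin.castSucc_zero, Fin.cons_zero,
    ← Fin.succ_castSucc, Fin.cons_succ]

theorem pathExpect_succ (k : ℕ) (P : S → A → S → ℝ) (pol : Fin (k + 1) → S → A → ℝ) (s : S)
    (F : (Fin (k + 2) → S) → (Fin (k + 1) → A) → ℝ) :
    pathExpect (k + 1) P pol s F = ∑ a, pol 0 s a * ∑ s', P s a s' *
      pathExpect k P (fun i => pol i.succ) s' fun σ α => F (Fin.cons s σ) (Fin.cons a α) := by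
  simp only [pathExpect, Fin.sum_pi_cons (k := k), pathWeight_cons, Fin.cons_zero, mul_assoc,
    Finset.mul_sum]
  conv_lhs => enter [2, s']; rw [Finset.sum_comm]
  rw [Finset.sum_comm]
  simp only [mul_left_comm (P s _ _)]

variable {P : S → A → S → ℝ} (hP : ∀ s a, ∑ s', P s a s' = 1)
include hP

theorem pathExpect_const (c : ℝ) :
    ∀ {k : ℕ} (pol : Fin k → S → A → ℝ), (∀ t s, ∑ a, pol t s a = 1) →
      ∀ s, pathExpect k P pol s (fun _ _ => c) = c
  | 0, _, _, _ => by simp [pathExpect, pathWeight]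
  | k + 1, pol, hpol, s => by
    simp only [pathExpect_succ, pathExpect_const c _ (fun t => hpol t.succ), ← Finset.sum_mul, hP,
      hpol, one_mul]

theorem pathExpect_marginal :
    ∀ {k : ℕ} (pol : Fin k → S → A → ℝ), (∀ t s, ∑ a, pol t s a = 1) →
      ∀ (s : S) (t : Fin k) (f : S → A → ℝ),
      pathExpect k P pol s (fun σ α => f (σ t.castSucc) (α t)) =
        pathExpect k P pol s (fun σ _ => ∑ a, pol t (σ t.castSucc) a * f (σ t.castSucc) a)
  | 0, _, _, _, t, _ => t.elim0
  | k + 1, pol, hpol, s, t, f => by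
    induction t using Fin.cases with
    | zero =>
      simp only [pathExpect_succ, Fin.castSucc_zero, Fin.cons_zero,
        pathExpect_const hP _ _ (fun t => hpol t.succ), ← Finset.sum_mul, hP, one_mul, hpol]
    | succ j =>
      simp only [pathExpect_succ, ← Fin.succ_castSucc, Fin.cons_succ,
        pathExpect_marginal _ (fun t => hpol t.succ)]

end Path

section Trajectory

variable {S A : Type*} [Fintype S] [Fintype A] {T : ℕ} {p0 : S → ℝ} {P : S → A → S → ℝ}
  {pol : Fin (T + 1) → S → A → ℝ}

theorem trajHat_eq (τ : (Fin (T + 2) → S) × (Fin (T + 1) → A)) :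
    trajHat T p0 P pol τ = p0 (τ.1 0) * pathWeight P pol τ.1 τ.2 :=
  rfl

theorem sum_trajHat_mul (F : (Fin (T + 2) → S) → (Fin (T + 1) → A) → ℝ) :
    ∑ τ, trajHat T p0 P pol τ * F τ.1 τ.2 = ∑ s, p0 s * pathExpect (T + 1) P pol s F := by
  simp only [Fintype.sum_prod_type, Fin.sum_pi_cons (k := T + 1), pathExpect, Finset.mul_sum,
    trajHat_eq, Fin.cons_zero, mul_assoc]

variable (hP : ∀ s a, ∑ s', P s a s' = 1) (hpol : ∀ t s, ∑ a, pol t s a = 1)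
include hP hpol

theorem sum_trajHat (hp0 : ∑ s, p0 s = 1) : ∑ τ, trajHat T p0 P pol τ = 1 := by
  simpa [pathExpect_const hP 1 pol hpol, hp0] using
    sum_trajHat_mul (p0 := p0) (P := P) (pol := pol) fun _ _ => 1

theorem sum_trajHat_mul_marginal (t : Fin (T + 1)) (f : S → A → ℝ) :
    ∑ τ, trajHat T p0 P pol τ * f (τ.1 t.castSucc) (τ.2 t) =
      ∑ τ, trajHat T p0 P pol τ * ∑ a, pol t (τ.1 t.castSucc) a * f (τ.1 t.castSucc) a := by
  simp only [sum_trajHat_mul (fun σ α => f (σ t.castSucc) (α t)),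
    sum_trajHat_mul (fun σ _ => ∑ a, pol t (σ t.castSucc) a * f (σ t.castSucc) a),
    pathExpect_marginal hP pol hpol]

end Trajectory

theorem KLdiv_div_sum {X : Type*} [Fintype X] {p w : X → ℝ} (hp : ∑ x, p x = 1)
    (hw : ∀ x, 0 < w x) :
    KLdiv p (fun x => w x / ∑ y, w y) = Real.log (∑ y, w y) + ∑ x, p x * Real.log (p x / w x) := by
  have hZ : 0 < ∑ y, w y :=
    Finset.sum_pos (fun x _ => hw x) (Finset.nonempty_of_sum_ne_zero (hp ▸ one_ne_zero))
  have hterm : ∀ x, p x * Real.log (p x / (w x / ∑ y, w y)) =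
      p x * Real.log (∑ y, w y) + p x * Real.log (p x / w x) := by
    intro x
    rcases eq_or_ne (p x) 0 with hx | hx
    · simp [hx]
    · rw [div_div_eq_mul_div, mul_div_right_comm,
        Real.log_mul (div_ne_zero hx (hw x).ne') hZ.ne']
      ring
  simp only [KLdiv, hterm, Finset.sum_add_distrib, ← Finset.sum_mul, hp, one_mul]

section MaxEnt

variable {S A : Type*} [Fintype S] [Fintype A] {T : ℕ} {p0 : S → ℝ} {P : S → A → S → ℝ}
  (r : S → A → ℝ) {pol : Fin (T + 1) → S → A → ℝ}

theorem trajOptW_pos (hp0 : ∀ s, 0 < p0 s) (hP : ∀ s a s', 0 < P s a s')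
    (τ : (Fin (T + 2) → S) × (Fin (T + 1) → A)) : 0 < trajOptW T p0 P r τ :=
  mul_pos (mul_pos (hp0 _) (Finset.prod_pos fun _ _ => hP _ _ _)) (Real.exp_pos _)

theorem log_trajHat_div_trajOptW (hp0 : ∀ s, 0 < p0 s) (hP : ∀ s a s', 0 < P s a s')
    (hpol : ∀ t s a, 0 < pol t s a) (τ : (Fin (T + 2) → S) × (Fin (T + 1) → A)) :
    Real.log (trajHat T p0 P pol τ / trajOptW T p0 P r τ) =
      -∑ t : Fin (T + 1),
        (r (τ.1 t.castSucc) (τ.2 t) - Real.log (pol t (τ.1 t.castSucc) (τ.2 t))) := by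
  have hc : p0 (τ.1 0) * ∏ t : Fin (T + 1), P (τ.1 t.castSucc) (τ.2 t) (τ.1 t.succ) ≠ 0 :=
    (mul_pos (hp0 _) (Finset.prod_pos fun _ _ => hP _ _ _)).ne'
  rw [trajHat, trajOptW, Finset.prod_mul_distrib, ← mul_assoc, mul_div_mul_left _ _ hc,
    Real.log_div (Finset.prod_pos fun _ _ => hpol _ _ _).ne' (Real.exp_pos _).ne', Real.log_exp,
    Real.log_prod fun _ _ => (hpol _ _ _).ne', Finset.sum_sub_distrib]
  ring

theorem KLdiv_trajHat_trajOpt (hp0 : ∀ s, 0 < p0 s) (hp0sum : ∑ s, p0 s = 1)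
    (hP : ∀ s a s', 0 < P s a s') (hPsum : ∀ s a, ∑ s', P s a s' = 1)
    (hpol : ∀ t s a, 0 < pol t s a) (hpolsum : ∀ t s, ∑ a, pol t s a = 1) :
    KLdiv (trajHat T p0 P pol) (fun τ => trajOptW T p0 P r τ / ∑ τ', trajOptW T p0 P r τ') =
      Real.log (∑ τ', trajOptW T p0 P r τ') -
        ∑ τ, trajHat T p0 P pol τ * ∑ t : Fin (T + 1),
          (r (τ.1 t.castSucc) (τ.2 t) - Real.log (pol t (τ.1 t.castSucc) (τ.2 t))) := by
  rw [KLdiv_div_sum (sum_trajHat hPsum hpolsum hp0sum) (trajOptW_pos r hp0 hP)]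
  simp only [log_trajHat_div_trajOptW r hp0 hP hpol, mul_neg, Finset.sum_neg_distrib,
    sub_eq_add_neg]

theorem sum_trajHat_mul_sum_sub_log (hPsum : ∀ s a, ∑ s', P s a s' = 1)
    (hpolsum : ∀ t s, ∑ a, pol t s a = 1) :
    ∑ τ, trajHat T p0 P pol τ * ∑ t : Fin (T + 1),
        (r (τ.1 t.castSucc) (τ.2 t) - Real.log (pol t (τ.1 t.castSucc) (τ.2 t))) =
      ∑ t : Fin (T + 1), ∑ τ, trajHat T p0 P pol τ * (r (τ.1 t.castSucc) (τ.2 t) -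
        ∑ a, pol t (τ.1 t.castSucc) a * Real.log (pol t (τ.1 t.castSucc) a)) := by
  simp only [Finset.mul_sum]
  rw [Finset.sum_comm]
  refine Finset.sum_congr rfl fun t _ => ?_
  simp only [mul_sub, Finset.sum_sub_distrib,
    sum_trajHat_mul_marginal hPsum hpolsum t fun s a => Real.log (pol t s a)]

end MaxEnt

theorem trajectory_KL_eq_maxEnt_general {S A : Type*} [Fintype S] [Fintype A]
    (T : ℕ)
    (p0 : S → ℝ) (hp0 : ∀ s, 0 < p0 s) (hp0sum : ∑ s, p0 s = 1)
    (P : S → A → S → ℝ) (hP : ∀ s a s', 0 < P s a s')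
    (hPsum : ∀ s a, ∑ s', P s a s' = 1)
    (r : S → A → ℝ)
    (pol : Fin (T + 1) → S → A → ℝ) (hpol : ∀ t s a, 0 < pol t s a)
    (hpolsum : ∀ t s, ∑ a, pol t s a = 1) :
    (KLdiv (trajHat T p0 P pol)
        (fun τ => trajOptW T p0 P r τ / ∑ τ', trajOptW T p0 P r τ') =
      Real.log (∑ τ', trajOptW T p0 P r τ') -
        ∑ τ, trajHat T p0 P pol τ *
          ∑ t : Fin (T + 1),
            (r (τ.1 t.castSucc) (τ.2 t) - Real.log (pol t (τ.1 t.castSucc) (τ.2 t)))) ∧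
    (∀ pol' : Fin (T + 1) → S → A → ℝ, (∀ t s a, 0 < pol' t s a) →
      (∀ t s, ∑ a, pol' t s a = 1) →
      (KLdiv (trajHat T p0 P pol)
          (fun τ => trajOptW T p0 P r τ / ∑ τ', trajOptW T p0 P r τ') ≤
        KLdiv (trajHat T p0 P pol')
          (fun τ => trajOptW T p0 P r τ / ∑ τ', trajOptW T p0 P r τ') ↔
      (∑ t : Fin (T + 1), ∑ τ, trajHat T p0 P pol' τ *
          (r (τ.1 t.castSucc) (τ.2 t) -
            ∑ a, pol' t (τ.1 t.castSucc) a * Real.log (pol' t (τ.1 t.castSucc) a))) ≤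
      (∑ t : Fin (T + 1), ∑ τ, trajHat T p0 P pol τ *
          (r (τ.1 t.castSucc) (τ.2 t) -
            ∑ a, pol t (τ.1 t.castSucc) a * Real.log (pol t (τ.1 t.castSucc) a))))) := by
  refine ⟨KLdiv_trajHat_trajOpt r hp0 hp0sum hP hPsum hpol hpolsum,
    fun pol' hpol' hpolsum' => ?_⟩
  rw [KLdiv_trajHat_trajOpt r hp0 hp0sum hP hPsum hpol hpolsum,
    KLdiv_trajHat_trajOpt r hp0 hp0sum hP hPsum hpol' hpolsum',
    sum_trajHat_mul_sum_sub_log r hPsum hpolsum, sum_trajHat_mul_sum_sub_log r hPsum hpolsum']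
  exact sub_le_sub_iff_left _

/-- `KL(p̂ ‖ p) = log Z − ∑_τ p̂(τ) ∑_t (r(s^t,a^t) − log π_t(a^t|s^t))`;
consequently minimizing `KL(p̂ ‖ p)` over policies is equivalent to maximizing the
maximum-entropy objective `∑_t E_{p̂}[ r(s^t,a^t) + H(π_t(·|s^t)) ]`. -/
theorem trajectory_KL_eq_maxEnt {S A : Type*} [Fintype S] [Fintype A]
    [Nonempty S] [Nonempty A] (T : ℕ)
    (p0 : S → ℝ) (hp0 : ∀ s, 0 < p0 s) (hp0sum : ∑ s, p0 s = 1)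
    (P : S → A → S → ℝ) (hP : ∀ s a s', 0 < P s a s')
    (hPsum : ∀ s a, ∑ s', P s a s' = 1)
    (r : S → A → ℝ)
    (pol : Fin (T + 1) → S → A → ℝ) (hpol : ∀ t s a, 0 < pol t s a)
    (hpolsum : ∀ t s, ∑ a, pol t s a = 1) :
    (KLdiv (trajHat T p0 P pol)
        (fun τ => trajOptW T p0 P r τ / ∑ τ', trajOptW T p0 P r τ') =
      Real.log (∑ τ', trajOptW T p0 P r τ') -
        ∑ τ, trajHat T p0 P pol τ *
          ∑ t : Fin (T + 1),
            (r (τ.1 t.castSucc) (τ.2 t) - Real.log (pol t (τ.1 t.castSucc) (τ.2 t)))) ∧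
    (∀ pol' : Fin (T + 1) → S → A → ℝ, (∀ t s a, 0 < pol' t s a) →
      (∀ t s, ∑ a, pol' t s a = 1) →
      (KLdiv (trajHat T p0 P pol)
          (fun τ => trajOptW T p0 P r τ / ∑ τ', trajOptW T p0 P r τ') ≤
        KLdiv (trajHat T p0 P pol')
          (fun τ => trajOptW T p0 P r τ / ∑ τ', trajOptW T p0 P r τ') ↔
      (∑ t : Fin (T + 1), ∑ τ, trajHat T p0 P pol' τ *
          (r (τ.1 t.castSucc) (τ.2 t) -
            ∑ a, pol' t (τ.1 t.castSucc) a * Real.log (pol' t (τ.1 t.castSucc) a))) ≤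
      (∑ t : Fin (T + 1), ∑ τ, trajHat T p0 P pol τ *
          (r (τ.1 t.castSucc) (τ.2 t) -
            ∑ a, pol t (τ.1 t.castSucc) a * Real.log (pol t (τ.1 t.castSucc) a))))) :=
  trajectory_KL_eq_maxEnt_general T p0 hp0 hp0sum P hP hPsum r pol hpol hpolsum
end

section
/- Let A_1,…,A_N be nonempty finite sets and let π be a strictly positive PMF on Π_{j=1}^N A_j. Suppose the tuple (q_1,…,q_N) of strictly positive PMFs minimizes KL( ⊗_{j=1}^N q_j ‖ π ) over all tuples of PMFs on A_1,…,A_N. Then for every index i, q_i(a_i) = exp(g_i(a_i)) / Σ_{a_i'} exp(g_i(a_i')), where g_i(a_i) = Σ_{a_{-i}} (Π_{j≠i} q_j(a_j)) · log π(a_i, a_{-i}); that is, any mean-field optimum simultaneously satisfies the fixed-point equations q_i ∝ exp E_{⊗_{j≠i} q_j}[ log π ] for all i. -/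
/-- Combine a value `x : A i` with values `c` at all coordinates `j ≠ i`
into a full configuration `(a_i, a_{-i})`. -/
def combine {N : ℕ} {A : Fin N → Type*} (i : Fin N) (x : A i)
    (c : ∀ j : {j : Fin N // j ≠ i}, A j.1) : ∀ j, A j :=
  fun j => if h : j = i then cast (congrArg A h.symm) x else c ⟨j, h⟩

/-- `g_i(a_i) = ∑_{a_{-i}} (∏_{j≠i} q_j(a_j)) · log π(a_i, a_{-i})`. -/
noncomputable def mfG {N : ℕ} {A : Fin N → Type*} [∀ j, Fintype (A j)]
    (π : (∀ j, A j) → ℝ) (i : Fin N) (q : ∀ j, A j → ℝ) : A i → ℝ :=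
  fun x => ∑ c : ∀ j : {j : Fin N // j ≠ i}, A j.1,
    (∏ j : {j : Fin N // j ≠ i}, q j.1 (c j)) * Real.log (π (combine i x c))

/-- The mean-field fixed-point map `q_i*(a_i) = exp(g_i(a_i)) / ∑_{a_i'} exp(g_i(a_i'))`. -/
noncomputable def mfStar {N : ℕ} {A : Fin N → Type*} [∀ j, Fintype (A j)]
    (π : (∀ j, A j) → ℝ) (i : Fin N) (q : ∀ j, A j → ℝ) : A i → ℝ :=
  fun x => Real.exp (mfG π i q x) / ∑ x', Real.exp (mfG π i q x')

/-!
Fix all factors except `q_i`. For a positive PMF `r` on `A i`, expanding the logarithm of the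
product shows `KL(r ⊗ q_{-i} ‖ π) = KL(r ‖ q_i*) + K`, where `q_i* ∝ exp g_i` is the mean-field
update and `K` does not depend on `r`. Comparing the optimum with the tuple in which `q_i` is
replaced by `q_i*` gives `KL(q_i ‖ q_i*) ≤ KL(q_i* ‖ q_i*) = 0`, and the equality case of Gibbs'
inequality forces `q_i = q_i*`.
-/

open Finset InformationTheory Function

section Gibbs

variable {X : Type*} [Fintype X] {p q : X → ℝ}

theorem KLdiv_self (p : X → ℝ) : KLdiv p p = 0 := by
  simp [KLdiv]

theorem KLdiv_eq_sum_mul_klFun (hq : ∀ x, 0 < q x) (hsum : ∑ x, p x = ∑ x, q x) :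
    KLdiv p q = ∑ x, q x * klFun (p x / q x) := by
  have hterm : ∀ x, q x * klFun (p x / q x) = p x * Real.log (p x / q x) + (q x - p x) := by
    intro x
    rw [klFun_apply]
    field_simp [(hq x).ne']
    ring
  simp only [hterm, sum_add_distrib, sum_sub_distrib, hsum, sub_self, add_zero, KLdiv]

theorem eq_of_KLdiv_nonpos (hp : ∀ x, 0 ≤ p x) (hq : ∀ x, 0 < q x)
    (hsum : ∑ x, p x = ∑ x, q x) (hKL : KLdiv p q ≤ 0) : p = q := by
  have hterm_nonneg : ∀ x ∈ univ, 0 ≤ q x * klFun (p x / q x) :=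
    fun x _ => mul_nonneg (hq x).le (klFun_nonneg (div_nonneg (hp x) (hq x).le))
  rw [KLdiv_eq_sum_mul_klFun hq hsum] at hKL
  have hzero := (sum_eq_zero_iff_of_nonneg hterm_nonneg).1
    (le_antisymm hKL (sum_nonneg hterm_nonneg))
  funext x
  have hklFun : klFun (p x / q x) = 0 :=
    (mul_eq_zero.1 (hzero x (mem_univ x))).resolve_left (hq x).ne'
  exact (div_eq_one_iff_eq (hq x).ne').1
    ((klFun_eq_zero_iff (div_nonneg (hp x) (hq x).le)).1 hklFun)

end Gibbs

section Combine

variable {N : ℕ} {A : Fin N → Type*}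

@[simp]
theorem combine_self (i : Fin N) (x : A i) (c : ∀ j : {j : Fin N // j ≠ i}, A j.1) :
    combine i x c i = x := by
  simp [combine]

theorem combine_of_ne (i : Fin N) (x : A i) (c : ∀ j : {j : Fin N // j ≠ i}, A j.1)
    {j : Fin N} (h : j ≠ i) : combine i x c j = c ⟨j, h⟩ := by
  simp [combine, h]

theorem sum_eq_sum_combine [∀ j, Fintype (A j)] (i : Fin N) (f : (∀ j, A j) → ℝ) :
    ∑ a, f a = ∑ x : A i, ∑ c : ∀ j : {j : Fin N // j ≠ i}, A j.1, f (combine i x c) := by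
  rw [← Fintype.sum_prod_type']
  refine Fintype.sum_equiv (Equiv.piSplitAt i A) _ _ fun a => congrArg f ?_
  funext j
  by_cases h : j = i
  · subst h; simp
  · simp [combine_of_ne _ _ _ h]

theorem prod_combine (i : Fin N) (f : ∀ j, A j → ℝ) (x : A i)
    (c : ∀ j : {j : Fin N // j ≠ i}, A j.1) :
    ∏ j, f j (combine i x c j) = f i x * ∏ j : {j : Fin N // j ≠ i}, f j.1 (c j) := by
  rw [← mul_prod_erase univ _ (mem_univ i), combine_self,
    prod_subtype (univ.erase i) (p := (· ≠ i)) (fun j => by simp)]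
  exact congrArg _ (prod_congr rfl fun j _ => by rw [combine_of_ne i x c j.2])

end Combine

section MeanField

variable {N : ℕ} {A : Fin N → Type*} [∀ j, Fintype (A j)]
  {π : (∀ j, A j) → ℝ} {i : Fin N} {q : ∀ j, A j → ℝ}

noncomputable def contextWeight (i : Fin N) (q : ∀ j, A j → ℝ)
    (c : ∀ j : {j : Fin N // j ≠ i}, A j.1) : ℝ :=
  ∏ j : {j : Fin N // j ≠ i}, q j.1 (c j)

theorem mfG_eq_sum_contextWeight (x : A i) :
    mfG π i q x = ∑ c, contextWeight i q c * Real.log (π (combine i x c)) :=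
  rfl

omit [∀ j, Fintype (A j)] in
theorem contextWeight_pos (hq : ∀ j x, 0 < q j x) (c : ∀ j : {j : Fin N // j ≠ i}, A j.1) :
    0 < contextWeight i q c :=
  prod_pos fun j _ => hq j.1 _

theorem sum_contextWeight (hqsum : ∀ j, ∑ x, q j x = 1) : ∑ c, contextWeight i q c = 1 := by
  simp only [contextWeight]
  rw [← Fintype.piFinset_univ, ← prod_univ_sum]
  exact prod_eq_one fun j _ => hqsum j.1

theorem mfStar_pos [Nonempty (A i)] (x : A i) : 0 < mfStar π i q x :=
  div_pos (Real.exp_pos _) (sum_pos (fun _ _ => Real.exp_pos _) univ_nonempty)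

theorem sum_mfStar [Nonempty (A i)] : ∑ x, mfStar π i q x = 1 := by
  simp only [mfStar]
  rw [← sum_div, div_self (sum_pos (fun _ _ => Real.exp_pos _) univ_nonempty).ne']

theorem KLdiv_mfStar [Nonempty (A i)] {r : A i → ℝ} (hr : ∀ x, 0 < r x) (hrsum : ∑ x, r x = 1) :
    KLdiv r (mfStar π i q) = ∑ x, r x * Real.log (r x) - ∑ x, r x * mfG π i q x
      + Real.log (∑ x', Real.exp (mfG π i q x')) := by
  have hZ : 0 < ∑ x', Real.exp (mfG π i q x') := sum_pos (fun _ _ => Real.exp_pos _) univ_nonempty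
  have hterm : ∀ x, r x * Real.log (r x / mfStar π i q x) = r x * Real.log (r x)
      - r x * mfG π i q x + r x * Real.log (∑ x', Real.exp (mfG π i q x')) := by
    intro x
    rw [Real.log_div (hr x).ne' (mfStar_pos x).ne', mfStar,
      Real.log_div (Real.exp_ne_zero _) hZ.ne', Real.log_exp]
    ring
  simp only [KLdiv, hterm, sum_add_distrib, sum_sub_distrib, ← sum_mul, hrsum, one_mul]

theorem KLdiv_prod_update (hπ : ∀ a, 0 < π a) (hq : ∀ j x, 0 < q j x)
    (hqsum : ∀ j, ∑ x, q j x = 1) {r : A i → ℝ} (hr : ∀ x, 0 < r x) (hrsum : ∑ x, r x = 1) :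
    KLdiv (fun a => ∏ j, update q i r j (a j)) π = ∑ x, r x * Real.log (r x)
      - ∑ x, r x * mfG π i q x + ∑ c, contextWeight i q c * Real.log (contextWeight i q c) := by
  set w := contextWeight i q
  have hprod : ∀ x c, ∏ j, update q i r j (combine i x c j) = r x * w c := by
    intro x c
    rw [prod_combine, update_self]
    exact congrArg _ (prod_congr rfl fun j _ => by rw [update_of_ne j.2])
  have hterm : ∀ x c, r x * w c * Real.log (r x * w c / π (combine i x c))
      = r x * Real.log (r x) * w c + r x * (w c * Real.log (w c))
        - r x * (w c * Real.log (π (combine i x c))) := by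
    intro x c
    rw [Real.log_div (mul_pos (hr x) (contextWeight_pos hq c)).ne' (hπ _).ne',
      Real.log_mul (hr x).ne' (contextWeight_pos hq c).ne']
    ring
  have hw_sum : ∑ c, w c = 1 := sum_contextWeight hqsum
  calc KLdiv (fun a => ∏ j, update q i r j (a j)) π
      = ∑ x, ∑ c, r x * w c * Real.log (r x * w c / π (combine i x c)) := by
        rw [KLdiv, sum_eq_sum_combine i]
        simp only [hprod]
    _ = ∑ x, (r x * Real.log (r x) + r x * ∑ c, w c * Real.log (w c) - r x * mfG π i q x) := by
        refine sum_congr rfl fun x _ => ?_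
        simp only [hterm, sum_add_distrib, sum_sub_distrib, ← mul_sum, hw_sum, mul_one]
        rfl
    _ = _ := by
        simp only [sum_add_distrib, sum_sub_distrib, ← sum_mul, hrsum, one_mul]
        ring

end MeanField

theorem meanField_optimum_is_fixed_point_general {N : ℕ} (A : Fin N → Type*)
    [∀ j, Fintype (A j)] [∀ j, Nonempty (A j)]
    (π : (∀ j, A j) → ℝ) (hπ : ∀ a, 0 < π a)
    (q : ∀ j, A j → ℝ) (hq : ∀ j x, 0 < q j x) (hqsum : ∀ j, ∑ x, q j x = 1)
    (hmin : ∀ q' : ∀ j, A j → ℝ, (∀ j x, 0 ≤ q' j x) → (∀ j, ∑ x, q' j x = 1) →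
      KLdiv (fun a => ∏ j, q j (a j)) π ≤ KLdiv (fun a => ∏ j, q' j (a j)) π) :
    ∀ i (x : A i), q i x = Real.exp (mfG π i q x) / ∑ x', Real.exp (mfG π i q x') := by
  intro i
  have hle := hmin (update q i (mfStar π i q))
    ((forall_update_iff q fun j f => ∀ x, 0 ≤ f x).2
      ⟨fun x => (mfStar_pos x).le, fun j _ x => (hq j x).le⟩)
    ((forall_update_iff q fun j f => ∑ x, f x = 1).2 ⟨sum_mfStar, fun j _ => hqsum j⟩)
  have hKL_opt := KLdiv_prod_update hπ hq hqsum (hq i) (hqsum i)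
  rw [update_eq_self] at hKL_opt
  rw [hKL_opt, KLdiv_prod_update hπ hq hqsum mfStar_pos sum_mfStar] at hle
  have hKL : KLdiv (q i) (mfStar π i q) ≤ KLdiv (mfStar π i q) (mfStar π i q) := by
    rw [KLdiv_mfStar (hq i) (hqsum i), KLdiv_mfStar mfStar_pos sum_mfStar]
    linarith
  rw [KLdiv_self] at hKL
  exact congrFun (eq_of_KLdiv_nonpos (fun x => (hq i x).le) mfStar_pos
    ((hqsum i).trans sum_mfStar.symm) hKL)

/-- Any tuple of strictly positive PMFs `(q_1,…,q_N)` minimizing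
`KL(⊗_j q_j ‖ π)` over all tuples of PMFs simultaneously satisfies the mean-field
fixed-point equations `q_i ∝ exp E_{⊗_{j≠i} q_j}[log π]` for every `i`. -/
theorem meanField_optimum_is_fixed_point {N : ℕ} (A : Fin N → Type*)
    [∀ j, Fintype (A j)] [∀ j, Nonempty (A j)]
    (π : (∀ j, A j) → ℝ) (hπ : ∀ a, 0 < π a) (hπsum : ∑ a, π a = 1)
    (q : ∀ j, A j → ℝ) (hq : ∀ j x, 0 < q j x) (hqsum : ∀ j, ∑ x, q j x = 1)
    (hmin : ∀ q' : ∀ j, A j → ℝ, (∀ j x, 0 ≤ q' j x) → (∀ j, ∑ x, q' j x = 1) →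
      KLdiv (fun a => ∏ j, q j (a j)) π ≤ KLdiv (fun a => ∏ j, q' j (a j)) π) :
    ∀ i (x : A i), q i x = Real.exp (mfG π i q x) / ∑ x', Real.exp (mfG π i q x') :=
  meanField_optimum_is_fixed_point_general A π hπ q hq hqsum hmin
end

section
/- Let S and A = Π_{i=1}^N A_i be nonempty finite sets, T ≥ 0, P(·|s,a) a PMF on S for each (s,a), and suppose the reward decomposes as r(s,a) = Σ_{i=1}^N r_i(s,a) and the policy is a product π_t(a|s) = Π_{i=1}^N q_{i,t}(a_i|s) with each q_{i,t}(·|s) a strictly positive PMF on A_i. Define per-agent functions by backward recursion: V_{i,T+1}(s) = 0; Q_{i,t}(s,a) = r_i(s,a) + Σ_{s'} P(s'|s,a)·V_{i,t+1}(s'); V_{i,t}(s) = Σ_a π_t(a|s)·( Q_{i,t}(s,a) − log q_{i,t}(a_i|s) ); and joint functions by V_{T+1}(s) = 0; Q_t(s,a) = r(s,a) + Σ_{s'} P(s'|s,a)·V_{t+1}(s'); V_t(s) = Σ_a π_t(a|s)·( Q_t(s,a) − log π_t(a|s) ). Then for all t, s, a: V_t(s) = Σ_{i=1}^N V_{i,t}(s)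 and Q_t(s,a) = Σ_{i=1}^N Q_{i,t}(s,a). -/
/-!
Both recursions are linear in the rewards and in the continuation values, and for a product
policy the entropy term splits as `log ∏ⱼ q_j(a_j) = ∑ⱼ log q_j(a_j)`. So if `V_{t+1}` is the sum
of the `V_{i,t+1}`, the Bellman backup makes `Q_t` the sum of the `Q_{i,t}`, and the soft
expectation under `π_t` then makes `V_t` the sum of the `V_{i,t}`; backward induction from
`V_{T+1} = 0` finishes.
-/

theorem Finset.sum_mul_sum_comm {R α ι : Type*} [NonUnitalNonAssocSemiring R]
    (s : Finset α) (t : Finset ι) (w : α → R) (f : ι → α → R) :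
    ∑ a ∈ s, w a * ∑ i ∈ t, f i a = ∑ i ∈ t, ∑ a ∈ s, w a * f i a := by
  simp_rw [Finset.mul_sum]
  exact Finset.sum_comm

theorem bellman_backup_sum {S ι : Type*} [Fintype S] [Fintype ι]
    (P : S → ℝ) (r : ι → ℝ) (W : ι → S → ℝ) :
    (∑ i, r i) + ∑ s', P s' * ∑ i, W i s' = ∑ i, (r i + ∑ s', P s' * W i s') := by
  rw [Finset.sum_mul_sum_comm, ← Finset.sum_add_distrib]

theorem soft_expectation_sum {α ι : Type*} [Fintype α] [Fintype ι]
    (π : α → ℝ) (Q ℓ : ι → α → ℝ) :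
    ∑ a, π a * (∑ i, Q i a - ∑ i, ℓ i a) = ∑ i, ∑ a, π a * (Q i a - ℓ i a) := by
  simp_rw [← Finset.sum_sub_distrib]
  exact Finset.sum_mul_sum_comm _ _ _ _

theorem soft_value_decomposition_general {S : Type*} [Fintype S]
    {N : ℕ} (A : Fin N → Type*) [∀ i, Fintype (A i)] (T : ℕ)
    (P : S → (∀ i, A i) → S → ℝ)
    (r : Fin N → S → (∀ i, A i) → ℝ)
    (q : ∀ i : Fin N, Fin (T + 1) → S → A i → ℝ)
    (hq : ∀ i t s x, 0 < q i t s x)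
    -- per-agent backward recursion
    (Vi : Fin N → Fin (T + 2) → S → ℝ) (Qi : Fin N → Fin (T + 1) → S → (∀ i, A i) → ℝ)
    (hVilast : ∀ i s, Vi i (Fin.last (T + 1)) s = 0)
    (hQi : ∀ i (t : Fin (T + 1)) s a,
      Qi i t s a = r i s a + ∑ s', P s a s' * Vi i t.succ s')
    (hVi : ∀ i (t : Fin (T + 1)) s, Vi i t.castSucc s =
      ∑ a : ∀ j, A j, (∏ j, q j t s (a j)) * (Qi i t s a - Real.log (q i t s (a i))))
    -- joint backward recursion
    (V : Fin (T + 2) → S → ℝ) (Qf : Fin (T + 1) → S → (∀ i, A i) → ℝ)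
    (hVlast : ∀ s, V (Fin.last (T + 1)) s = 0)
    (hQ : ∀ (t : Fin (T + 1)) s a,
      Qf t s a = (∑ i, r i s a) + ∑ s', P s a s' * V t.succ s')
    (hV : ∀ (t : Fin (T + 1)) s, V t.castSucc s =
      ∑ a : ∀ j, A j, (∏ j, q j t s (a j)) *
        (Qf t s a - Real.log (∏ j, q j t s (a j)))) :
    (∀ (t : Fin (T + 2)) (s : S), V t s = ∑ i, Vi i t s) ∧
    (∀ (t : Fin (T + 1)) (s : S) (a : ∀ j, A j), Qf t s a = ∑ i, Qi i t s a) := by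
  have hQstep : ∀ t : Fin (T + 1), (∀ s, V t.succ s = ∑ i, Vi i t.succ s) →
      ∀ s a, Qf t s a = ∑ i, Qi i t s a := by
    intro t hVsucc s a
    simp only [hQ, hQi, hVsucc]
    exact bellman_backup_sum _ _ _
  have hVall : ∀ t s, V t s = ∑ i, Vi i t s := by
    intro t
    induction t using Fin.reverseInduction with
    | last => simp [hVlast, hVilast]
    | cast t ih =>
      intro s
      have hlog : ∀ a : ∀ j, A j,
          Real.log (∏ j, q j t s (a j)) = ∑ j, Real.log (q j t s (a j)) := fun a =>
        Real.log_prod fun j _ => (hq j t s (a j)).ne'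
      simp only [hV, hQstep t ih s, hlog, hVi]
      exact soft_expectation_sum _ _ _
  exact ⟨hVall, fun t => hQstep t (hVall t.succ)⟩

/-- If the reward decomposes as `r = ∑_i r_i` and the policy is a
product `π_t(a|s) = ∏_i q_{i,t}(a_i|s)` of strictly positive PMFs, then the soft value
and soft Q functions defined by backward recursion decompose into the per-agent ones:
`V_t = ∑_i V_{i,t}` and `Q_t = ∑_i Q_{i,t}`. -/
theorem soft_value_decomposition {S : Type*} [Fintype S] [Nonempty S]
    {N : ℕ} (A : Fin N → Type*) [∀ i, Fintype (A i)] [∀ i, Nonempty (A i)] (T : ℕ)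
    (P : S → (∀ i, A i) → S → ℝ) (hP0 : ∀ s a s', 0 ≤ P s a s')
    (hPsum : ∀ s a, ∑ s', P s a s' = 1)
    (r : Fin N → S → (∀ i, A i) → ℝ)
    (q : ∀ i : Fin N, Fin (T + 1) → S → A i → ℝ)
    (hq : ∀ i t s x, 0 < q i t s x) (hqsum : ∀ i t s, ∑ x, q i t s x = 1)
    -- per-agent backward recursion
    (Vi : Fin N → Fin (T + 2) → S → ℝ) (Qi : Fin N → Fin (T + 1) → S → (∀ i, A i) → ℝ)
    (hVilast : ∀ i s, Vi i (Fin.last (T + 1)) s = 0)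
    (hQi : ∀ i (t : Fin (T + 1)) s a,
      Qi i t s a = r i s a + ∑ s', P s a s' * Vi i t.succ s')
    (hVi : ∀ i (t : Fin (T + 1)) s, Vi i t.castSucc s =
      ∑ a : ∀ j, A j, (∏ j, q j t s (a j)) * (Qi i t s a - Real.log (q i t s (a i))))
    -- joint backward recursion
    (V : Fin (T + 2) → S → ℝ) (Qf : Fin (T + 1) → S → (∀ i, A i) → ℝ)
    (hVlast : ∀ s, V (Fin.last (T + 1)) s = 0)
    (hQ : ∀ (t : Fin (T + 1)) s a,
      Qf t s a = (∑ i, r i s a) + ∑ s', P s a s' * V t.succ s')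
    (hV : ∀ (t : Fin (T + 1)) s, V t.castSucc s =
      ∑ a : ∀ j, A j, (∏ j, q j t s (a j)) *
        (Qf t s a - Real.log (∏ j, q j t s (a j)))) :
    (∀ (t : Fin (T + 2)) (s : S), V t s = ∑ i, Vi i t s) ∧
    (∀ (t : Fin (T + 1)) (s : S) (a : ∀ j, A j), Qf t s a = ∑ i, Qi i t s a) :=
  soft_value_decomposition_general A T P r q hq Vi Qi hVilast hQi hVi V Qf hVlast hQ hV
end
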